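/- arXiv:2005.09447 — 2 statements merged into one kernel-verified Lean document; each statement's English description precedes it below -/
import Mathlib

section
/- Let G be a connected {house, hole}-free graph with no universal line. Then no line generated by an edge equals a line generated by a good pair; i.e., the set L1 of lines generated by edges and the set L2 of lines generated by good pairs are disjoint. -/
open SimpleGraph

variable {V : Type*}

/-- The interval between two vertices: vertices on some shortest path. -/
def interval (G : SimpleGraph V) (x y : V) : Set V :=
  {z | G.dist x y = G.dist x z + G.dist z y}

/-- The line generated by two vertices. -/
def line (G : SimpleGraph V) (x y : V) : Set V :=
  {z | z ∈ interval G x y ∨ x ∈ interval G z y ∨ y ∈ interval G x z}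

/-- The house graph: a 5-cycle 0-1-2-3-4-0 plus the chord 1-4. -/
def house : SimpleGraph (Fin 5) :=
  SimpleGraph.fromEdgeSet {s(0,1), s(1,2), s(2,3), s(3,4), s(4,0), s(1,4)}

/-- A graph is {house, hole}-free if it has no induced house and no induced
cycle of length at least 5. -/
def HHFree (G : SimpleGraph V) : Prop :=
  IsEmpty (house ↪g G) ∧ ∀ n, 5 ≤ n → IsEmpty (cycleGraph n ↪g G)

/-- A graph is hole-free if it has no induced cycle of length at least 5. -/
def HoleFree (G : SimpleGraph V) : Prop :=
  ∀ n, 5 ≤ n → IsEmpty (cycleGraph n ↪g G)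

/-- A good pair: two vertices at distance 2 with a common neighbour `c`
such that `line u c = line c v`. -/
def GoodPair (G : SimpleGraph V) (u v : V) : Prop :=
  G.dist u v = 2 ∧ ∃ c, G.Adj u c ∧ G.Adj c v ∧ line G u c = line G c v

/-- The set of all lines of a graph (generated by pairs of distinct vertices). -/
def lineSet (G : SimpleGraph V) : Set (Set V) :=
  {ℓ | ∃ u v : V, u ≠ v ∧ line G u v = ℓ}

/-!
Suppose `line u v = line x y` for an edge `uv` and a good pair `x c y`. Since `line u v` is not
universal, some vertex is equidistant from `u` and `v`. In a {house, hole}-free graph this forces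
a common neighbour `t` of `u` and `v`: for a nearest such vertex `w`, shortest paths from `u` and
from `v` to `w` form a ladder, and the topmost rungs of that ladder span a hole or a house.

Now `t ∉ line u v = line x y`, while `line x c = line c y` says that no vertex has distances to
`x` and `y` differing by exactly one; hence `t` is at the same distance `m` from `x` and from `y`,
and `m ≠ 1`. Both `u` and `v` lie in `line x y` next to `t`, which puts them at distance `m ± 1`
from `x`; being adjacent, they are then at the same distance from `x`, so `x ∉ line u v`,
although `x ∈ line x y`.
-/

section Lines

variable {G : SimpleGraph V} {u v x y c z : V}

theorem mem_line_iff : z ∈ line G x y ↔ G.dist x y = G.dist x z + G.dist z y ∨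
    G.dist z y = G.dist z x + G.dist x y ∨ G.dist x z = G.dist x y + G.dist y z :=
  Iff.rfl

theorem mem_line_iff_of_adj (huv : G.Adj u v) : z ∈ line G u v ↔ G.dist u z ≠ G.dist v z := by
  have := dist_eq_one_iff_adj.2 huv
  have := huv.diff_dist_adj (u := z)
  have := G.dist_comm (u := z) (v := u)
  have := G.dist_comm (u := z) (v := v)
  rw [mem_line_iff]
  omega

theorem mem_line_iff_of_dist_eq_two (hxy : G.dist x y = 2) :
    z ∈ line G x y ↔ G.dist x z = G.dist y z + 2 ∨ G.dist y z = G.dist x z + 2 ∨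
      G.dist x z = 1 ∧ G.dist y z = 1 := by
  have := G.dist_comm (u := z) (v := x)
  have := G.dist_comm (u := z) (v := y)
  rw [mem_line_iff]
  omega

theorem dist_ne_dist_add_one_of_line_eq (hxc : G.Adj x c) (hcy : G.Adj c y)
    (h : line G x c = line G c y) (z : V) :
    G.dist x z ≠ G.dist y z + 1 ∧ G.dist y z ≠ G.dist x z + 1 := by
  have hz : z ∈ line G x c ↔ z ∈ line G c y := by rw [h]
  rw [mem_line_iff_of_adj hxc, mem_line_iff_of_adj hcy] at hz
  have := hxc.diff_dist_adj (u := z)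
  have := hcy.diff_dist_adj (u := z)
  have := G.dist_comm (u := z) (v := x)
  have := G.dist_comm (u := z) (v := y)
  have := G.dist_comm (u := z) (v := c)
  omega

theorem line_ne_of_common_adj_of_dist_eq_two {t : V} (huv : G.Adj u v) (hut : G.Adj u t)
    (hvt : G.Adj v t) (hxy : G.dist x y = 2)
    (hodd : ∀ z, G.dist x z ≠ G.dist y z + 1 ∧ G.dist y z ≠ G.dist x z + 1) :
    line G u v ≠ line G x y := by
  intro h
  have hmem (z : V) : z ∈ line G x y ↔ G.dist u z ≠ G.dist v z := by
    rw [← h, mem_line_iff_of_adj huv]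
  have ht : t ∉ line G x y := by
    rw [hmem, dist_eq_one_iff_adj.2 hut, dist_eq_one_iff_adj.2 hvt, not_not]
  rw [mem_line_iff_of_dist_eq_two hxy] at ht
  have hxt : G.dist x t = G.dist y t := by
    have := hodd t
    have := (Reachable.of_dist_ne_zero (by omega : G.dist x y ≠ 0)).dist_triangle_left t
    have := (Reachable.of_dist_ne_zero (by omega : G.dist x y ≠ 0)).symm.dist_triangle_left t
    have := G.dist_comm (u := x) (v := y)
    omega
  have near (z : V) (hzt : G.Adj z t) (hz : z ∈ line G x y) :
      G.dist x z = G.dist x t + 1 ∨ G.dist x z + 1 = G.dist x t := by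
    rw [mem_line_iff_of_dist_eq_two hxy] at hz
    have := hzt.diff_dist_adj (u := x)
    have := hzt.diff_dist_adj (u := y)
    omega
  have hu : u ∈ line G x y := by
    rw [hmem, SimpleGraph.dist_self, dist_eq_one_iff_adj.2 huv.symm]; omega
  have hv : v ∈ line G x y := by
    rw [hmem, SimpleGraph.dist_self, dist_eq_one_iff_adj.2 huv]; omega
  have hx : G.dist x u ≠ G.dist x v := by
    rw [G.dist_comm, G.dist_comm (u := x), ← hmem, mem_line_iff_of_dist_eq_two hxy,
      SimpleGraph.dist_self, G.dist_comm, hxy]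
    omega
  have := huv.diff_dist_adj (u := x)
  have := near u hut hu
  have := near v hvt hv
  omega

end Lines

theorem cycleGraph_adj_iff_val {n : ℕ} (hn : 2 ≤ n) {a b : Fin n} :
    (cycleGraph n).Adj a b ↔ b.val = a.val + 1 ∨ a.val = b.val + 1 ∨
      a.val = 0 ∧ b.val = n - 1 ∨ b.val = 0 ∧ a.val = n - 1 := by
  have ha := a.isLt
  have hb := b.isLt
  rw [cycleGraph_adj']
  rcases lt_trichotomy a b with h | rfl | h
  · rw [Fin.coe_sub_iff_lt.2 h, Fin.coe_sub_iff_le.2 h.le]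
    omega
  · rw [Fin.sub_val_of_le le_rfl]
    omega
  · rw [Fin.coe_sub_iff_le.2 h.le, Fin.coe_sub_iff_lt.2 h]
    omega

section Embeddings

variable {G : SimpleGraph V}

theorem nonempty_cycleGraph_embedding {n : ℕ} (hn : 2 ≤ n) (f : ℕ → V)
    (hinj : ∀ a < n, ∀ b < n, f a = f b → a = b)
    (hadj : ∀ a < n, ∀ b < n, G.Adj (f a) (f b) ↔
      b = a + 1 ∨ a = b + 1 ∨ a = 0 ∧ b = n - 1 ∨ b = 0 ∧ a = n - 1) :
    Nonempty (cycleGraph n ↪g G) :=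
  ⟨⟨⟨fun a => f a, fun a b hab => Fin.ext (hinj a a.isLt b b.isLt hab)⟩,
    fun {a b} => (hadj a a.isLt b b.isLt).trans (cycleGraph_adj_iff_val hn).symm⟩⟩

/-- The cycle `p 0, …, p r, q s, …, q 0`. -/
theorem nonempty_cycleGraph_embedding_of_paths (p q : ℕ → V) (r s : ℕ)
    (hp : ∀ a ≤ r, ∀ b ≤ r, G.Adj (p a) (p b) ↔ b = a + 1 ∨ a = b + 1)
    (hq : ∀ a ≤ s, ∀ b ≤ s, G.Adj (q a) (q b) ↔ b = a + 1 ∨ a = b + 1)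
    (hpq : ∀ a ≤ r, ∀ b ≤ s, G.Adj (p a) (q b) ↔ a = 0 ∧ b = 0 ∨ a = r ∧ b = s)
    (hp_inj : ∀ a ≤ r, ∀ b ≤ r, p a = p b → a = b)
    (hq_inj : ∀ a ≤ s, ∀ b ≤ s, q a = q b → a = b)
    (hpq_ne : ∀ a ≤ r, ∀ b ≤ s, p a ≠ q b) :
    Nonempty (cycleGraph (r + s + 2) ↪g G) := by
  refine nonempty_cycleGraph_embedding (by omega)
    (fun a => if a ≤ r then p a else q (r + s + 1 - a)) (fun a ha b hb => ?_)
    (fun a ha b hb => ?_)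
  · split_ifs with h₁ h₂ h₂
    · exact hp_inj a h₁ b h₂
    · exact fun h => absurd h (hpq_ne a h₁ _ (by omega))
    · exact fun h => absurd h.symm (hpq_ne b h₂ _ (by omega))
    · intro h
      have := hq_inj _ (by omega) _ (by omega) h
      omega
  · split_ifs with h₁ h₂ h₂
    · rw [hp a h₁ b h₂]; omega
    · rw [hpq a h₁ _ (by omega)]; omega
    · rw [G.adj_comm, hpq b h₂ _ (by omega)]; omega
    · rw [hq _ (by omega) _ (by omega)]; omega

theorem house_neighborSet_injective : Function.Injective house.neighborSet := by
  intro i j h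
  have := Set.ext_iff.1 h
  fin_cases i <;> fin_cases j <;> simp [Fin.forall_fin_succ, house] at this ⊢

theorem nonempty_house_embedding_of_adj {a₀ a₁ a₂ a₃ a₄ : V}
    (h₀₁ : G.Adj a₀ a₁) (h₁₂ : G.Adj a₁ a₂) (h₂₃ : G.Adj a₂ a₃) (h₃₄ : G.Adj a₃ a₄)
    (h₀₄ : G.Adj a₀ a₄) (h₁₄ : G.Adj a₁ a₄)
    (n₀₂ : ¬G.Adj a₀ a₂) (n₀₃ : ¬G.Adj a₀ a₃) (n₁₃ : ¬G.Adj a₁ a₃) (n₂₄ : ¬G.Adj a₂ a₄) :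
    Nonempty (house ↪g G) := by
  let f : Fin 5 → V := ![a₀, a₁, a₂, a₃, a₄]
  have hadj (i j : Fin 5) : G.Adj (f i) (f j) ↔ house.Adj i j := by
    fin_cases i <;> fin_cases j <;> simp [f, house, G.adj_comm, *]
  refine ⟨⟨⟨f, fun i j hij => ?_⟩, hadj _ _⟩⟩
  exact house_neighborSet_injective (Set.ext fun k => by
    rw [mem_neighborSet, mem_neighborSet, ← hadj, ← hadj, hij])

end Embeddings

/-- Shortest paths `p` and `q` from the two ends of the edge `p 0 q 0` to a common vertex
`p k = q k`, each of whose inner vertices is nearer to its own end. An edge `p i q i` is a rung. -/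
structure IsLadder (G : SimpleGraph V) (p q : ℕ → V) (k : ℕ) : Prop where
  adj_zero : G.Adj (p 0) (q 0)
  eq_top : p k = q k
  adj_succ_left : ∀ i < k, G.Adj (p i) (p (i + 1))
  adj_succ_right : ∀ i < k, G.Adj (q i) (q (i + 1))
  dist_left : ∀ i ≤ k, G.dist (p 0) (p i) = i
  dist_right : ∀ i ≤ k, G.dist (q 0) (q i) = i
  dist_left_right : ∀ i < k, G.dist (q 0) (p i) = i + 1
  dist_right_left : ∀ i < k, G.dist (p 0) (q i) = i + 1

namespace IsLadder

variable {G : SimpleGraph V} {p q : ℕ → V} {k i j : ℕ}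

theorem symm (h : IsLadder G p q k) : IsLadder G q p k :=
  ⟨h.adj_zero.symm, h.eq_top.symm, h.adj_succ_right, h.adj_succ_left, h.dist_right,
    h.dist_left, h.dist_right_left, h.dist_left_right⟩

theorem adj_left_iff (h : IsLadder G p q k) (hi : i ≤ k) (hj : j ≤ k) :
    G.Adj (p i) (p j) ↔ j = i + 1 ∨ i = j + 1 := by
  constructor
  · intro hadj
    have := hadj.diff_dist_adj (u := p 0)
    have := h.dist_left i hi
    have := h.dist_left j hj
    have : i ≠ j := by rintro rfl; exact hadj.ne rfl
    omega
  · rintro (rfl | rfl)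
    · exact h.adj_succ_left i (by omega)
    · exact (h.adj_succ_left j (by omega)).symm

theorem injOn_left (h : IsLadder G p q k) (hi : i ≤ k) (hj : j ≤ k) (hij : p i = p j) :
    i = j := by
  rw [← h.dist_left i hi, ← h.dist_left j hj, hij]

theorem left_ne_right (h : IsLadder G p q k) (hi : i < k) (hj : j < k) : p i ≠ q j := by
  intro hij
  have := h.dist_left i hi.le
  have := h.dist_right j hj.le
  have := h.dist_left_right i hi
  have := h.dist_right_left j hj
  rw [hij] at *
  omega

theorem adj_left_right_iff (h : IsLadder G p q k) (hi : i < k) (hj : j < k) :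
    G.Adj (p i) (q j) ↔ i = j ∧ G.Adj (p i) (q i) := by
  refine ⟨fun hadj => ?_, fun ⟨hij, hadj⟩ => hij ▸ hadj⟩
  have := hadj.diff_dist_adj (u := p 0)
  have := hadj.symm.diff_dist_adj (u := q 0)
  have := h.dist_left i hi.le
  have := h.dist_right j hj.le
  have := h.dist_left_right i hi
  have := h.dist_right_left j hj
  obtain rfl : i = j := by omega
  exact ⟨rfl, hadj⟩

theorem exists_greatest_rung (h : IsLadder G p q k) (m : ℕ) :
    ∃ i ≤ m, G.Adj (p i) (q i) ∧ ∀ j, i < j → j ≤ m → ¬G.Adj (p j) (q j) := by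
  classical
  exact ⟨Nat.findGreatest (fun i => G.Adj (p i) (q i)) m, Nat.findGreatest_le m,
    Nat.findGreatest_spec (P := fun i => G.Adj (p i) (q i)) (Nat.zero_le m) h.adj_zero,
    fun _ => Nat.findGreatest_is_greatest⟩

/-- The hole `p i, …, p k = q k, …, q i` of length `2 (k - i) + 1`. -/
theorem not_holeFree_of_greatest_rung (h : IsLadder G p q k) (hik : i + 2 ≤ k)
    (hi : G.Adj (p i) (q i)) (habove : ∀ j, i < j → j < k → ¬G.Adj (p j) (q j)) :
    ¬HoleFree G := by
  intro hH
  refine (hH (k - i + (k - i - 1) + 2) (by omega)).false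
    (nonempty_cycleGraph_embedding_of_paths (fun a => p (i + a)) (fun b => q (i + b))
      (k - i) (k - i - 1) (fun a ha b hb => ?_) (fun a ha b hb => ?_) (fun a ha b hb => ?_)
      (fun a ha b hb hab => ?_) (fun a ha b hb hab => ?_) (fun a ha b hb => ?_)).some
  · rw [h.adj_left_iff (by omega) (by omega)]
    omega
  · rw [h.symm.adj_left_iff (by omega) (by omega)]
    omega
  · rcases (show a = k - i ∨ a < k - i by omega) with rfl | ha
    · rw [show i + (k - i) = k by omega, h.eq_top, h.symm.adj_left_iff le_rfl (by omega)]
      omega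
    · rw [h.adj_left_right_iff (by omega) (by omega)]
      constructor
      · rintro ⟨hab, hadj⟩
        by_contra hne
        exact habove (i + a) (by omega) (by omega) hadj
      · rintro (⟨rfl, rfl⟩ | ⟨rfl, -⟩)
        · exact ⟨rfl, hi⟩
        · omega
  · have := h.injOn_left (by omega) (by omega) hab
    omega
  · have := h.symm.injOn_left (by omega) (by omega) hab
    omega
  · rcases (show i + a = k ∨ i + a < k by omega) with hak | hak
    · rw [hak, h.eq_top]
      intro hab
      have := h.symm.injOn_left le_rfl (by omega) hab
      omega
    · exact h.left_ne_right hak (by omega)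

/-- The hole `p i, …, p j, q j, …, q i` of length `2 (j - i) + 2`. -/
theorem not_holeFree_of_consecutive_rungs (h : IsLadder G p q k) (hij : i + 2 ≤ j)
    (hjk : j < k) (hi : G.Adj (p i) (q i)) (hj : G.Adj (p j) (q j))
    (hbetween : ∀ l, i < l → l < j → ¬G.Adj (p l) (q l)) :
    ¬HoleFree G := by
  intro hH
  refine (hH (j - i + (j - i) + 2) (by omega)).false
    (nonempty_cycleGraph_embedding_of_paths (fun a => p (i + a)) (fun b => q (i + b))
      (j - i) (j - i) (fun a ha b hb => ?_) (fun a ha b hb => ?_) (fun a ha b hb => ?_)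
      (fun a ha b hb hab => ?_) (fun a ha b hb hab => ?_)
      (fun a ha b hb => h.left_ne_right (by omega) (by omega))).some
  · rw [h.adj_left_iff (by omega) (by omega)]
    omega
  · rw [h.symm.adj_left_iff (by omega) (by omega)]
    omega
  · rw [h.adj_left_right_iff (by omega) (by omega)]
    constructor
    · rintro ⟨hab, hadj⟩
      by_contra hne
      exact hbetween (i + a) (by omega) (by omega) hadj
    · rintro (⟨rfl, rfl⟩ | ⟨rfl, rfl⟩)
      · exact ⟨rfl, hi⟩
      · exact ⟨rfl, by rwa [show i + (j - i) = j by omega]⟩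
  · have := h.injOn_left (by omega) (by omega) hab
    omega
  · have := h.symm.injOn_left (by omega) (by omega) hab
    omega

/-- The house `p k, p (k - 1), p (k - 2), q (k - 2), q (k - 1)`. -/
theorem nonempty_house_embedding (h : IsLadder G p q k) (hk : 2 ≤ k)
    (h₁ : G.Adj (p (k - 1)) (q (k - 1))) (h₂ : G.Adj (p (k - 2)) (q (k - 2))) :
    Nonempty (house ↪g G) := by
  have hp {j} (hj : j ≤ k) : G.Adj (p k) (p j) ↔ j = k + 1 ∨ k = j + 1 :=
    h.adj_left_iff le_rfl hj
  have hq {j} (hj : j ≤ k) : G.Adj (p k) (q j) ↔ j = k + 1 ∨ k = j + 1 :=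
    h.eq_top ▸ h.symm.adj_left_iff le_rfl hj
  refine nonempty_house_embedding_of_adj ((hp (by omega)).2 (by omega))
    ((h.adj_left_iff (by omega) (by omega)).2 (by omega)) h₂
    ((h.symm.adj_left_iff (by omega) (by omega)).2 (by omega)) ((hq (by omega)).2 (by omega)) h₁
    (by rw [hp (by omega)]; omega) (by rw [hq (by omega)]; omega)
    (by rw [h.adj_left_right_iff (by omega) (by omega)]; omega)
    (by rw [h.adj_left_right_iff (by omega) (by omega)]; omega)

theorem not_hhFree (h : IsLadder G p q k) (hk : 2 ≤ k) : ¬HHFree G := by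
  rintro ⟨hhouse, hhole⟩
  obtain ⟨i, hik, hi, habove⟩ := h.exists_greatest_rung (k - 1)
  by_cases hi2 : i + 2 ≤ k
  · exact h.not_holeFree_of_greatest_rung hi2 hi (fun j h₁ h₂ => habove j h₁ (by omega)) hhole
  obtain rfl : i = k - 1 := by omega
  obtain ⟨j, hjk, hj, hbetween⟩ := h.exists_greatest_rung (k - 2)
  by_cases hj2 : j = k - 2
  · exact hhouse.false (h.nonempty_house_embedding hk hi (hj2 ▸ hj)).some
  · exact h.not_holeFree_of_consecutive_rungs (by omega) (by omega) hj hi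
      (fun l h₁ h₂ => hbetween l h₁ (by omega)) hhole

end IsLadder

theorem SimpleGraph.Walk.dist_getVert_of_length_eq_dist {G : SimpleGraph V} {u w : V}
    {P : G.Walk u w} (hP : P.length = G.dist u w) {i : ℕ} (hi : i ≤ P.length) :
    G.dist u (P.getVert i) = i ∧ G.dist (P.getVert i) w = P.length - i := by
  have h₁ : G.dist u (P.getVert i) ≤ i := (dist_le (P.take i)).trans (by simp)
  have h₂ : G.dist (P.getVert i) w ≤ P.length - i := (dist_le (P.drop i)).trans (by simp)
  have := (P.take i).reachable.dist_triangle_left w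
  omega

section CommonNeighbour

variable {G : SimpleGraph V} {u v w : V}

theorem dist_getVert_eq_add_one_of_forall_dist_le (huv : G.Adj u v) {P : G.Walk u w}
    (hP : P.length = G.dist u w) (hw : G.dist u w = G.dist v w)
    (hmin : ∀ z, G.dist u z = G.dist v z → G.dist u w ≤ G.dist u z) {i : ℕ} (hi : i < P.length) :
    G.dist v (P.getVert i) = i + 1 := by
  obtain ⟨h₁, h₂⟩ := P.dist_getVert_of_length_eq_dist hP hi.le
  have := (huv.symm.reachable.trans (P.take i).reachable).dist_triangle_left w
  have := huv.diff_dist_adj (u := P.getVert i)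
  have := hmin (P.getVert i)
  have := G.dist_comm (u := u) (v := P.getVert i)
  have := G.dist_comm (u := v) (v := P.getVert i)
  omega

theorem isLadder_getVert (huv : G.Adj u v) {P : G.Walk u w} {Q : G.Walk v w}
    (hP : P.length = G.dist u w) (hQ : Q.length = G.dist v w) (hw : G.dist u w = G.dist v w)
    (hmin : ∀ z, G.dist u z = G.dist v z → G.dist u w ≤ G.dist u z) :
    IsLadder G P.getVert Q.getVert (G.dist u w) where
  adj_zero := by simpa using huv
  eq_top := by rw [← hP, P.getVert_length, show P.length = Q.length by omega, Q.getVert_length]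
  adj_succ_left i hi := P.adj_getVert_succ (hP ▸ hi)
  adj_succ_right i hi := Q.adj_getVert_succ (by omega)
  dist_left i hi := by simpa using (P.dist_getVert_of_length_eq_dist hP (hP ▸ hi)).1
  dist_right i hi := by simpa using (Q.dist_getVert_of_length_eq_dist hQ (by omega)).1
  dist_left_right i hi := by
    simpa using dist_getVert_eq_add_one_of_forall_dist_le huv hP hw hmin (hP ▸ hi)
  dist_right_left i hi := by
    simpa using dist_getVert_eq_add_one_of_forall_dist_le huv.symm hQ hw.symm
      (fun z hz => by have := hmin z hz.symm; omega) (by omega)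

theorem exists_common_adj_of_dist_eq (hG : G.Connected) (hH : HHFree G) (huv : G.Adj u v)
    (hw : G.dist u w = G.dist v w) : ∃ t, G.Adj u t ∧ G.Adj v t := by
  classical
  have hex : ∃ k, ∃ z, G.dist u z = G.dist v z ∧ G.dist u z = k := ⟨_, w, hw, rfl⟩
  obtain ⟨z, hz, hzk⟩ := Nat.find_spec hex
  have hmin (z' : V) (hz' : G.dist u z' = G.dist v z') : G.dist u z ≤ G.dist u z' :=
    hzk ▸ Nat.find_min' hex ⟨z', hz', rfl⟩
  obtain ⟨P, hP⟩ := hG.exists_walk_length_eq_dist u z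
  obtain ⟨Q, hQ⟩ := hG.exists_walk_length_eq_dist v z
  by_cases hk : 2 ≤ G.dist u z
  · exact ((isLadder_getVert huv hP hQ hz hmin).not_hhFree hk hH).elim
  rcases (show G.dist u z = 0 ∨ G.dist u z = 1 by omega) with h | h
  · exact (huv.ne ((hG.dist_eq_zero_iff.1 h).trans (hG.dist_eq_zero_iff.1 (hz ▸ h)).symm)).elim
  · exact ⟨z, dist_eq_one_iff_adj.1 h, dist_eq_one_iff_adj.1 (hz ▸ h)⟩

end CommonNeighbour

theorem stmt14 (G : SimpleGraph V) (hG : G.Connected) (hH : HHFree G)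
    (hNoUniv : ∀ u v : V, u ≠ v → line G u v ≠ Set.univ) :
    ∀ u v x y : V, G.Adj u v → GoodPair G x y → line G u v ≠ line G x y := by
  rintro u v x y huv ⟨hxy, c, hxc, hcy, hline⟩
  obtain ⟨w, hw⟩ := (Set.ne_univ_iff_exists_notMem _).1 (hNoUniv u v huv.ne)
  rw [mem_line_iff_of_adj huv, not_not] at hw
  obtain ⟨t, hut, hvt⟩ := exists_common_adj_of_dist_eq hG hH huv hw
  exact line_ne_of_common_adj_of_dist_eq_two huv hut hvt hxy
    (dist_ne_dist_add_one_of_line_eq hxc hcy hline)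
end

section
/- Let G be a connected graph and x_0, x_1, x_2, x_3 a C_4-module of G (in cyclic order). If G − x_0 has a universal line generated by two vertices at distance at most 2, or has at least |V(G)| − 1 distinct lines, then G has a universal line generated by two vertices at distance at most 2, or at least |V(G)| distinct lines. -/
open SimpleGraph

variable {V : Type*}

/-!
`x₀` and `x₂` are false twins. Folding `x₀` onto `x₂` retracts `G` onto `G - x₀`, so `G - x₀` is
isometric in `G`, its lines are the traces of the lines of `G`, and `x₀`, `x₂` are at equal
distance from every other vertex. Hence a line of `G` through two vertices other than `x₀`
contains `x₂` as soon as it contains `x₀`, and conversely for vertices other than `x₂`.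

A universal line of `G - x₀` therefore stays universal in `G`, except possibly one through `x₂`;
the module structure rules out the bad case, where the other generator is at distance two.
For the count, if `line x₀ x₂` is not universal, a vertex `z` outside it gives the line
`line x₀ z`, which contains `x₀` but not `x₂`, so it is a line of `G` that does not come from a
line of `G - x₀`.
-/

section Lines

variable {G : SimpleGraph V} {a b u x y : V}

lemma left_mem_line (G : SimpleGraph V) (x y : V) : x ∈ line G x y :=
  Or.inl (by simp [interval])

lemma right_mem_line (G : SimpleGraph V) (x y : V) : y ∈ line G x y :=
  Or.inl (by simp [interval])

lemma interval_comm (G : SimpleGraph V) (x y : V) : interval G x y = interval G y x := by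
  ext z
  simp only [interval, Set.mem_ofPred_eq]
  rw [G.dist_comm (u := x) (v := y), G.dist_comm (u := x) (v := z), G.dist_comm (u := z) (v := y)]
  omega

lemma line_comm (G : SimpleGraph V) (x y : V) : line G x y = line G y x := by
  ext z
  simp only [line, Set.mem_ofPred_eq]
  rw [interval_comm G x y, interval_comm G z y, interval_comm G x z]
  tauto

lemma line_induce_eq_preimage {s : Set V}
    (hiso : ∀ u v : s, (G.induce s).dist u v = G.dist u v) (u v : s) :
    line (G.induce s) u v = Subtype.val ⁻¹' line G u v := by
  ext z
  simp only [line, interval, Set.mem_ofPred_eq, Set.mem_preimage, hiso]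

lemma mem_line_iff_of_dist_eq (ha : G.dist x a = G.dist y a) (hb : G.dist x b = G.dist y b) :
    x ∈ line G a b ↔ y ∈ line G a b := by
  simp only [line, interval, Set.mem_ofPred_eq, G.dist_comm (u := a) (v := x),
    G.dist_comm (u := b) (v := x), G.dist_comm (u := a) (v := y),
    G.dist_comm (u := b) (v := y), ha, hb]

lemma notMem_line_of_dist_eq (h : G.dist u a = G.dist u b) (h0 : G.dist a b ≠ 0)
    (h2 : G.dist a b ≠ 2 * G.dist u a) : a ∉ line G u b := by
  have hau : G.dist a u = G.dist u a := G.dist_comm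
  have hba : G.dist b a = G.dist a b := G.dist_comm
  rintro (h' | h' | h') <;> simp only [interval, Set.mem_ofPred_eq] at h' <;> omega

end Lines

namespace SimpleGraph

variable {V' : Type*} {G : SimpleGraph V} {G' : SimpleGraph V'} {a b u v x y z : V}

lemma Reachable.dist_map_le (f : G →g G') (h : G.Reachable u v) :
    G'.dist (f u) (f v) ≤ G.dist u v := by
  obtain ⟨p, hp⟩ := h.exists_walk_length_eq_dist
  simpa [hp] using dist_le (p.map f)

def twinRetraction [DecidableEq V] (htw : ∀ w, G.Adj x w ↔ G.Adj y w) (hxy : x ≠ y) :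
    G →g G.induce {w | w ≠ x} where
  toFun w := if hw : w = x then ⟨y, hxy.symm⟩ else ⟨w, hw⟩
  map_rel' {a b} hab := by
    by_cases ha : a = x <;> by_cases hb : b = x <;> simp only [ha, hb, dite_true, dite_false,
      comap_adj, Function.Embedding.subtype_apply]
    · subst ha hb; exact absurd hab G.irrefl
    · exact (htw b).mp (ha ▸ hab)
    · exact ((htw a).mp (hb ▸ hab).symm).symm
    · exact hab

@[simp] lemma coe_twinRetraction_of_ne [DecidableEq V] (htw : ∀ w, G.Adj x w ↔ G.Adj y w)
    (hxy : x ≠ y) (hz : z ≠ x) : (twinRetraction htw hxy z : V) = z := by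
  simp [twinRetraction, hz]

@[simp] lemma twinRetraction_coe [DecidableEq V] (htw : ∀ w, G.Adj x w ↔ G.Adj y w)
    (hxy : x ≠ y) (u : {w | w ≠ x}) : twinRetraction htw hxy u = u :=
  Subtype.ext (coe_twinRetraction_of_ne htw hxy u.prop)

@[simp] lemma coe_twinRetraction_self [DecidableEq V] (htw : ∀ w, G.Adj x w ↔ G.Adj y w)
    (hxy : x ≠ y) : (twinRetraction htw hxy x : V) = y := by
  simp [twinRetraction]

lemma Connected.dist_le_of_twins (hG : G.Connected) (htw : ∀ w, G.Adj x w ↔ G.Adj y w)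
    (hxy : x ≠ y) (hz : z ≠ x) : G.dist y z ≤ G.dist x z := by
  classical
  simpa [hz] using (hG.preconnected x z).dist_map_le
    ((Embedding.induce {w | w ≠ x}).toHom.comp (twinRetraction htw hxy))

lemma Connected.dist_eq_of_twins (hG : G.Connected) (htw : ∀ w, G.Adj x w ↔ G.Adj y w)
    (hxy : x ≠ y) (hzx : z ≠ x) (hzy : z ≠ y) : G.dist x z = G.dist y z :=
  le_antisymm (hG.dist_le_of_twins (fun w ↦ (htw w).symm) hxy.symm hzy)
    (hG.dist_le_of_twins htw hxy hzx)

lemma Connected.dist_induce_eq_of_twins (hG : G.Connected) (htw : ∀ w, G.Adj x w ↔ G.Adj y w)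
    (hxy : x ≠ y) (u v : {w | w ≠ x}) : (G.induce {w | w ≠ x}).dist u v = G.dist u v := by
  classical
  have hreach := hG.preconnected u v
  refine le_antisymm ?_ ?_
  · simpa using hreach.dist_map_le (twinRetraction htw hxy)
  · have hreach' := hreach.map (twinRetraction htw hxy)
    simp only [twinRetraction_coe] at hreach'
    simpa using hreach'.dist_map_le (Embedding.induce {w | w ≠ x}).toHom

lemma Connected.dist_eq_two_of_twins (hG : G.Connected) (htw : ∀ w, G.Adj x w ↔ G.Adj y w)
    (hxy : x ≠ y) : G.dist x y = 2 := by
  have hnadj : ¬G.Adj x y := fun h ↦ G.irrefl ((htw y).mp h)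
  obtain ⟨p⟩ := hG.preconnected x y
  cases p with
  | nil => exact absurd rfl hxy
  | cons hxw _ =>
    have hle : G.dist x y ≤ 2 := dist_le (.cons hxw (.cons ((htw _).mp hxw).symm .nil))
    have hlt := hG.one_lt_dist_of_ne_of_not_adj hxy hnadj
    omega

lemma Connected.mem_line_of_twins (hG : G.Connected) (htw : ∀ w, G.Adj x w ↔ G.Adj y w)
    (hxy : x ≠ y) (ha : a ≠ x) (hb : b ≠ x) (hx : x ∈ line G a b) : y ∈ line G a b := by
  obtain rfl | hay := eq_or_ne a y
  · exact left_mem_line G a b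
  obtain rfl | hby := eq_or_ne b y
  · exact right_mem_line G a b
  exact (mem_line_iff_of_dist_eq (hG.dist_eq_of_twins htw hxy ha hay)
    (hG.dist_eq_of_twins htw hxy hb hby)).mp hx

lemma Connected.notMem_line_of_twins (hG : G.Connected) (htw : ∀ w, G.Adj x w ↔ G.Adj y w)
    (hxy : x ≠ y) (hz : z ∉ line G x y) : y ∉ line G x z := by
  have hzx : z ≠ x := fun h ↦ hz (h ▸ left_mem_line G x y)
  have hzy : z ≠ y := fun h ↦ hz (h ▸ right_mem_line G x y)
  have hxz := hG.dist_eq_of_twins htw hxy hzx hzy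
  have hxy2 := hG.dist_eq_two_of_twins htw hxy
  have hzx1 : G.dist x z ≠ 1 := by
    intro h1
    apply hz
    left
    simp only [interval, Set.mem_ofPred_eq, G.dist_comm (u := z), ← hxz]
    omega
  rw [line_comm]
  apply notMem_line_of_dist_eq <;> simp only [G.dist_comm (u := z), G.dist_comm (u := y) (v := x)]
    <;> omega

lemma Connected.mem_line_of_induce_eq_univ (hG : G.Connected)
    (htw : ∀ w, G.Adj x w ↔ G.Adj y w) (hxy : x ≠ y) {u v : {w | w ≠ x}}
    (hl : line (G.induce {w | w ≠ x}) u v = Set.univ) (hz : z ≠ x) : z ∈ line G u v := by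
  rw [line_induce_eq_preimage (hG.dist_induce_eq_of_twins htw hxy)] at hl
  exact Set.eq_univ_iff_forall.mp hl ⟨z, hz⟩

lemma Connected.line_eq_univ_of_induce_eq_univ (hG : G.Connected)
    (htw : ∀ w, G.Adj x w ↔ G.Adj y w) (hxy : x ≠ y) {u v : {w | w ≠ x}}
    (hl : line (G.induce {w | w ≠ x}) u v = Set.univ) (hx : x ∈ line G u v) :
    line G u v = Set.univ := by
  refine Set.eq_univ_of_forall fun z ↦ ?_
  obtain rfl | hz := eq_or_ne z x
  · exact hx
  · exact hG.mem_line_of_induce_eq_univ htw hxy hl hz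

lemma Connected.ncard_lineSet_induce_lt [Finite V] (hG : G.Connected)
    (htw : ∀ w, G.Adj x w ↔ G.Adj y w) (hxy : x ≠ y) (hz : z ∉ line G x y) :
    (lineSet (G.induce {w | w ≠ x})).ncard < (lineSet G).ncard := by
  set S : Set (Set V) := {ℓ | ∃ a b : {w | w ≠ x}, a ≠ b ∧ line G a b = ℓ}
  have hsub : lineSet (G.induce {w | w ≠ x}) ⊆ (Subtype.val ⁻¹' ·) '' S := by
    rintro _ ⟨a, b, hab, rfl⟩
    exact ⟨line G a b, ⟨a, b, hab, rfl⟩,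
      (line_induce_eq_preimage (hG.dist_induce_eq_of_twins htw hxy) a b).symm⟩
  have hzx : z ≠ x := fun h ↦ hz (h ▸ left_mem_line G x y)
  have hS : S ⊂ lineSet G := by
    refine Set.ssubset_iff_exists.mpr ⟨?_, line G x z, ⟨x, z, hzx.symm, rfl⟩, ?_⟩
    · rintro _ ⟨a, b, hab, rfl⟩
      exact ⟨a, b, Subtype.val_injective.ne hab, rfl⟩
    · rintro ⟨a, b, -, hℓ⟩
      apply hG.notMem_line_of_twins htw hxy hz
      rw [← hℓ]
      exact hG.mem_line_of_twins htw hxy a.prop b.prop (hℓ ▸ left_mem_line G x z)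
  calc (lineSet (G.induce {w | w ≠ x})).ncard
      ≤ ((Subtype.val ⁻¹' ·) '' S).ncard := Set.ncard_le_ncard hsub
    _ ≤ S.ncard := Set.ncard_image_le
    _ < (lineSet G).ncard := Set.ncard_lt_ncard hS

def IsModule (G : SimpleGraph V) (s : Set V) : Prop :=
  ∀ z ∉ s, ∀ m ∈ s, ∀ m' ∈ s, G.Adj z m → G.Adj z m'

lemma IsModule.adj_iff_of_forall_mem {s : Set V} (hM : G.IsModule s) (hx : x ∈ s) (hy : y ∈ s)
    (h : ∀ w ∈ s, G.Adj x w ↔ G.Adj y w) (w : V) : G.Adj x w ↔ G.Adj y w := by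
  by_cases hw : w ∈ s
  · exact h w hw
  · rw [G.adj_comm x, G.adj_comm y]
    exact ⟨hM w hw x hx y hy, hM w hw y hy x hx⟩

lemma IsModule.dist_eq_two {s : Set V} {m m' : V} (hM : G.IsModule s) (hu : u ∉ s)
    (hm : m ∈ s) (hm' : m' ∈ s) (h : G.dist u m = 2) : G.dist u m' = 2 := by
  have hreach : G.Reachable u m := Reachable.of_dist_ne_zero (by omega)
  obtain ⟨-, hnadj, c, huc, hcm⟩ :=
    edist_eq_two_iff.mp (by rw [← hreach.coe_dist_eq_edist, h]; rfl)
  have hc : c ∉ s := fun hc ↦ hnadj (hM u hu c hc m hm huc)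
  have hcm' : G.Adj c m' := hM c hc m hm m' hm' hcm.symm
  have hle : G.dist u m' ≤ 2 := dist_le (.cons huc (.cons hcm' .nil))
  have hlt := Reachable.one_lt_dist_of_ne_of_not_adj ⟨.cons huc (.cons hcm' .nil)⟩
    (fun h ↦ hu (h ▸ hm')) (fun h ↦ hnadj (hM u hu m' hm' m hm h))
  omega

lemma IsModule.notMem_line_of_dist_eq_two {s : Set V} {m : V} (hM : G.IsModule s)
    (hu : u ∉ s) (hm : m ∈ s) (hy : y ∈ s) (hmy : G.Adj m y) (h : G.dist u y = 2) :
    m ∉ line G u y := by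
  have hmy1 := dist_eq_one_iff_adj.mpr hmy
  have hum := hM.dist_eq_two hu hy hm h
  apply notMem_line_of_dist_eq <;> omega

/-- Away from `x₂` this is twin symmetry. A line of `G - x₀` through `x₂` and a vertex `u` at
distance two is never universal: `u` lies outside the module, so `d(u, x₁) = d(u, x₂) = 2`, and
then `x₁` is not on the line. -/
lemma Connected.line_eq_univ_of_isModule_of_induce (hG : G.Connected)
    {x0 x1 x2 x3 : V} (hM : G.IsModule {x0, x1, x2, x3}) (h12 : G.Adj x1 x2)
    (h23 : G.Adj x2 x3) (htw : ∀ w, G.Adj x0 w ↔ G.Adj x2 w) (hne02 : x0 ≠ x2)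
    {u v : {w | w ≠ x0}} (hl : line (G.induce {w | w ≠ x0}) u v = Set.univ)
    (hd : G.dist u v ≤ 2) (hu : (u : V) ≠ x2) : line G u v = Set.univ := by
  refine hG.line_eq_univ_of_induce_eq_univ htw hne02 hl ?_
  by_cases hv : (v : V) = x2
  · rw [hv] at hd ⊢
    have hpos := hG.pos_dist_of_ne hu
    obtain hd1 | hd2 : G.dist u x2 = 1 ∨ G.dist u x2 = 2 := by omega
    · have h0u := hG.dist_eq_of_twins htw hne02 u.prop hu
      have h02 := hG.dist_eq_two_of_twins htw hne02
      right; left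
      simp only [interval, Set.mem_ofPred_eq, h0u, G.dist_comm (u := x2), h02]
      omega
    · have h12' := dist_eq_one_iff_adj.mpr h12
      have h32 := dist_eq_one_iff_adj.mpr h23.symm
      have hu1 : (u : V) ≠ x1 := fun h ↦ by rw [h] at hd2; omega
      have hu3 : (u : V) ≠ x3 := fun h ↦ by rw [h] at hd2; omega
      have hx1 : x1 ≠ x0 := fun h ↦ G.irrefl ((htw x2).mp (h ▸ h12))
      have hx1_mem := hG.mem_line_of_induce_eq_univ htw hne02 hl hx1
      rw [hv] at hx1_mem
      have hu_out : (u : V) ∉ ({x0, x1, x2, x3} : Set V) := by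
        simp [show (u : V) ≠ x0 from u.prop, hu1, hu, hu3]
      exact absurd hx1_mem (hM.notMem_line_of_dist_eq_two hu_out (by simp) (by simp) h12 hd2)
  · exact hG.mem_line_of_twins (fun w ↦ (htw w).symm) hne02.symm hu hv
      (hG.mem_line_of_induce_eq_univ htw hne02 hl hne02.symm)

end SimpleGraph

theorem stmt15_general [Fintype V] (G : SimpleGraph V) (hG : G.Connected)
    (x0 x1 x2 x3 : V) (hnd : ([x0, x1, x2, x3] : List V).Nodup)
    (h01 : G.Adj x0 x1) (h12 : G.Adj x1 x2) (h23 : G.Adj x2 x3)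
    (h30 : G.Adj x3 x0) (h02 : ¬ G.Adj x0 x2)
    (hmod : ∀ z : V, z ∉ ({x0, x1, x2, x3} : Set V) →
      ((G.Adj z x0 ∧ G.Adj z x1 ∧ G.Adj z x2 ∧ G.Adj z x3) ∨
       (¬ G.Adj z x0 ∧ ¬ G.Adj z x1 ∧ ¬ G.Adj z x2 ∧ ¬ G.Adj z x3)))
    (hyp : (∃ u v : {x : V // x ≠ x0}, u ≠ v ∧
            (G.induce {x : V | x ≠ x0}).dist u v ≤ 2 ∧
            line (G.induce {x : V | x ≠ x0}) u v = Set.univ) ∨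
           Fintype.card V - 1 ≤ (lineSet (G.induce {x : V | x ≠ x0})).ncard) :
    (∃ u v : V, u ≠ v ∧ G.dist u v ≤ 2 ∧ line G u v = Set.univ) ∨
      Fintype.card V ≤ (lineSet G).ncard := by
  have hne02 : x0 ≠ x2 := fun h ↦ by simp [h] at hnd
  have hM : G.IsModule {x0, x1, x2, x3} := by
    intro z hz m hm m' hm' hzm
    rcases hmod z hz with h | h <;> rcases hm with rfl | rfl | rfl | rfl <;>
      rcases hm' with rfl | rfl | rfl | rfl <;> tauto
  have htw : ∀ w, G.Adj x0 w ↔ G.Adj x2 w := hM.adj_iff_of_forall_mem (by simp) (by simp) <| by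
    rintro w (rfl | rfl | rfl | rfl)
    · exact iff_of_false G.irrefl fun h ↦ h02 h.symm
    · exact iff_of_true h01 h12.symm
    · exact iff_of_false h02 G.irrefl
    · exact iff_of_true h30.symm h23
  have hdist := hG.dist_induce_eq_of_twins htw hne02
  rcases hyp with ⟨u, v, huv, hd, hl⟩ | hcard
  · rw [hdist] at hd
    have huv' : (u : V) ≠ v := Subtype.val_injective.ne huv
    by_cases hu : (u : V) = x2
    · rw [line_comm] at hl
      rw [G.dist_comm] at hd
      exact Or.inl ⟨v, u, huv'.symm, hd, hG.line_eq_univ_of_isModule_of_induce hM h12 h23 htw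
        hne02 hl hd (hu ▸ huv'.symm)⟩
    · exact Or.inl ⟨u, v, huv', hd, hG.line_eq_univ_of_isModule_of_induce hM h12 h23 htw
        hne02 hl hd hu⟩
  · by_cases huniv : line G x0 x2 = Set.univ
    · exact Or.inl ⟨x0, x2, hne02, (hG.dist_eq_two_of_twins htw hne02).le, huniv⟩
    · obtain ⟨z, hz⟩ := (Set.ne_univ_iff_exists_notMem _).mp huniv
      have := hG.ncard_lineSet_induce_lt htw hne02 hz
      exact Or.inr (by omega)

theorem stmt15 [Fintype V] (G : SimpleGraph V) (hG : G.Connected)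
    (x0 x1 x2 x3 : V) (hnd : ([x0, x1, x2, x3] : List V).Nodup)
    (h01 : G.Adj x0 x1) (h12 : G.Adj x1 x2) (h23 : G.Adj x2 x3)
    (h30 : G.Adj x3 x0) (h02 : ¬ G.Adj x0 x2) (h13 : ¬ G.Adj x1 x3)
    (hmod : ∀ z : V, z ∉ ({x0, x1, x2, x3} : Set V) →
      ((G.Adj z x0 ∧ G.Adj z x1 ∧ G.Adj z x2 ∧ G.Adj z x3) ∨
       (¬ G.Adj z x0 ∧ ¬ G.Adj z x1 ∧ ¬ G.Adj z x2 ∧ ¬ G.Adj z x3)))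
    (hconn : (G.induce {x : V | x ≠ x0}).Connected)
    (hyp : (∃ u v : {x : V // x ≠ x0}, u ≠ v ∧
            (G.induce {x : V | x ≠ x0}).dist u v ≤ 2 ∧
            line (G.induce {x : V | x ≠ x0}) u v = Set.univ) ∨
           Fintype.card V - 1 ≤ (lineSet (G.induce {x : V | x ≠ x0})).ncard) :
    (∃ u v : V, u ≠ v ∧ G.dist u v ≤ 2 ∧ line G u v = Set.univ) ∨
      Fintype.card V ≤ (lineSet G).ncard :=
  stmt15_general G hG x0 x1 x2 x3 hnd h01 h12 h23 h30 h02 hmod hyp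
end
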